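/- arXiv:2505.24794 — 5 statements merged into one kernel-verified Lean document; each statement's English description precedes it below -/
import Mathlib

section
/- Let G_L and G_R be graphs on disjoint vertex sets and t ∈ ℕ. Then Sp(G_L ⊔ K̄_t, G_R) ⊇ Sp(G_L, G_R) + (2^t − 1) · i(G_L), where S + c denotes {s + c : s ∈ S}. -/
open Classical in
/-- `numIndep G` is the number of independent vertex subsets of `G`. -/
noncomputable def numIndep {V : Type} [Fintype V] (G : SimpleGraph V) : ℕ :=
  Fintype.card {s : Finset V // ∀ u ∈ s, ∀ v ∈ s, ¬ G.Adj u v}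

/-- The disjoint union of two graphs on disjoint vertex sets. -/
def sumGraph {α β : Type} (G : SimpleGraph α) (H : SimpleGraph β) :
    SimpleGraph (α ⊕ β) where
  Adj x y := match x, y with
    | Sum.inl a, Sum.inl b => G.Adj a b
    | Sum.inr a, Sum.inr b => H.Adj a b
    | _, _ => False
  symm := by
    constructor
    rintro (a | a) (b | b) h
    · exact G.adj_symm h
    · exact h.elim
    · exact h.elim
    · exact H.adj_symm h
  loopless := by
    constructor
    rintro (a | a) h
    · exact G.irrefl h
    · exact H.irrefl h

/-- `G` is a partial join of `Gl` and `Gr`. -/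
def IsPartialJoin {α β : Type} (Gl : SimpleGraph α) (Gr : SimpleGraph β)
    (G : SimpleGraph (α ⊕ β)) : Prop :=
  (∀ a b, G.Adj (Sum.inl a) (Sum.inl b) ↔ Gl.Adj a b) ∧
  (∀ a b, G.Adj (Sum.inr a) (Sum.inr b) ↔ Gr.Adj a b)

/-- The partial join spectrum `Sp(Gl, Gr)`. -/
noncomputable def spec {α β : Type} [Fintype α] [Fintype β]
    (Gl : SimpleGraph α) (Gr : SimpleGraph β) : Set ℕ :=
  {n | ∃ G : SimpleGraph (α ⊕ β), IsPartialJoin Gl Gr G ∧ numIndep G = n}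

open Classical

def finsetSumEquiv {X Y : Type} : Finset (X ⊕ Y) ≃ Finset X × Finset Y where
  toFun s := (s.toLeft, s.toRight)
  invFun p := p.1.disjSum p.2
  left_inv s := Finset.toLeft_disjSum_toRight
  right_inv p := by simp

def extGraph {α β : Type} (t : ℕ) (G : SimpleGraph (α ⊕ β)) :
    SimpleGraph ((α ⊕ Fin t) ⊕ β) where
  Adj x y := match x, y with
    | .inl (.inl a), .inl (.inl b) => G.Adj (.inl a) (.inl b)
    | .inl (.inl a), .inr b => G.Adj (.inl a) (.inr b)
    | .inr a, .inl (.inl b) => G.Adj (.inr a) (.inl b)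
    | .inr a, .inr b => G.Adj (.inr a) (.inr b)
    | .inl (.inr _), .inr _ => True
    | .inr _, .inl (.inr _) => True
    | _, _ => False
  symm := by
    constructor
    rintro (⟨a | a⟩ | a) (⟨b | b⟩ | b) h <;>
      first | trivial | exact G.adj_symm h | exact h.elim
  loopless := by
    constructor
    rintro (⟨a | a⟩ | a) h <;> first | exact G.irrefl h | exact h

noncomputable def splitEquiv {α β γ : Type} (R : Finset α → Finset β → Prop)
    (Rl : Finset α → Prop) (hRl : ∀ A, R A ∅ ↔ Rl A) :
    {q : (Finset α × Finset γ) × Finset β // R q.1.1 q.2 ∧ (q.1.2 = ∅ ∨ q.2 = ∅)} ≃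
      ({p : Finset α × Finset β // R p.1 p.2} ⊕
        ({T : Finset γ // T ≠ ∅} × {A : Finset α // Rl A})) where
  toFun q :=
    if h : q.1.1.2 = ∅ then .inl ⟨(q.1.1.1, q.1.2), q.2.1⟩
    else .inr (⟨q.1.1.2, h⟩, ⟨q.1.1.1, (hRl _).1 (by
      rcases q.2 with ⟨h1, h2 | h2⟩
      · exact absurd h2 h
      · rw [h2] at h1; exact h1)⟩)
  invFun x := match x with
    | .inl ⟨(A, B), h⟩ => ⟨((A, ∅), B), h, .inl rfl⟩
    | .inr (⟨T, hT⟩, ⟨A, hA⟩) => ⟨((A, T), ∅), (hRl A).2 hA, .inr rfl⟩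
  left_inv := by
    rintro ⟨⟨⟨A, T⟩, B⟩, h1, h2⟩
    by_cases h : T = ∅
    · subst h; simp
    · have hB : B = ∅ := h2.resolve_left h
      subst hB; simp [h]
  right_inv := by
    rintro (⟨⟨A, B⟩, h⟩ | ⟨⟨T, hT⟩, ⟨A, hA⟩⟩)
    · simp
    · simp [hT]


theorem cardCongr' {X Y : Type} (i1 : Fintype X) (i2 : Fintype Y) (e : X ≃ Y) :
    @Fintype.card X i1 = @Fintype.card Y i2 := @Fintype.card_congr X Y i1 i2 e

def IndepP {V : Type} (G : SimpleGraph V) (s : Finset V) : Prop :=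
  ∀ u ∈ s, ∀ v ∈ s, ¬ G.Adj u v

set_option maxHeartbeats 1000000 in
theorem numIndep_ext {α β : Type} [Fintype α] [Fintype β] (Gl : SimpleGraph α)
    (t : ℕ) (G : SimpleGraph (α ⊕ β))
    (hL : ∀ a b, G.Adj (.inl a) (.inl b) ↔ Gl.Adj a b) :
    numIndep (extGraph t G) = numIndep G + (2 ^ t - 1) * numIndep Gl := by
  have key : ∀ (A : Finset α) (T : Finset (Fin t)) (B : Finset β),
      IndepP (extGraph t G) ((A.disjSum T).disjSum B) ↔
        (IndepP G (A.disjSum B) ∧ (T = ∅ ∨ B = ∅)) := by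
    intro A T B
    constructor
    · intro H
      refine ⟨?_, ?_⟩
      · rintro (a | b) hu (a' | b') hv h
        · exact H (.inl (.inl a)) (by simp_all) (.inl (.inl a')) (by simp_all) h
        · exact H (.inl (.inl a)) (by simp_all) (.inr b') (by simp_all) h
        · exact H (.inr b) (by simp_all) (.inl (.inl a')) (by simp_all) h
        · exact H (.inr b) (by simp_all) (.inr b') (by simp_all) h
      · by_contra hc
        push_neg at hc
        obtain ⟨hT, hB⟩ := hc
        obtain ⟨i, hi⟩ := hT
        obtain ⟨b, hb⟩ := hB
        exact H (.inl (.inr i)) (by simp [hi]) (.inr b) (by simp [hb]) trivial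
    · rintro ⟨h0, hTB⟩ u hu v hv h
      rcases u with (⟨a | i⟩ | b) <;> rcases v with (⟨a' | i'⟩ | b') <;>
        simp only [Finset.inl_mem_disjSum, Finset.inr_mem_disjSum] at hu hv <;>
        first
          | exact h
          | exact h0 _ (by simp [hu]) _ (by simp [hv]) h
          | (rcases hTB with h1 | h1 <;> subst h1 <;> simp_all)
  have h' : ∀ s : Finset ((α ⊕ Fin t) ⊕ β),
      IndepP (extGraph t G) s ↔
        (IndepP G (s.toLeft.toLeft.disjSum s.toRight) ∧
          (s.toLeft.toRight = ∅ ∨ s.toRight = ∅)) := by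
    intro s
    have := key s.toLeft.toLeft s.toLeft.toRight s.toRight
    rwa [Finset.toLeft_disjSum_toRight, Finset.toLeft_disjSum_toRight] at this
  have hRl : ∀ A : Finset α, IndepP G (A.disjSum (∅ : Finset β)) ↔ IndepP Gl A := by
    intro A
    constructor
    · intro H a ha a' ha' hadj
      exact H (.inl a) (by simp [ha]) (.inl a') (by simp [ha']) ((hL a a').2 hadj)
    · rintro H u hu v hv hadj
      rcases u with (a | b) <;> rcases v with (a' | b') <;>
        simp only [Finset.inl_mem_disjSum, Finset.inr_mem_disjSum,
          Finset.notMem_empty] at hu hv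
      exact H a hu a' hv ((hL a a').1 hadj)
  let E : Finset ((α ⊕ Fin t) ⊕ β) ≃ (Finset α × Finset (Fin t)) × Finset β :=
    finsetSumEquiv.trans (Equiv.prodCongr finsetSumEquiv (Equiv.refl (Finset β)))
  have c0 : numIndep (extGraph t G) =
      Fintype.card {q : (Finset α × Finset (Fin t)) × Finset β //
        IndepP G (q.1.1.disjSum q.2) ∧ (q.1.2 = ∅ ∨ q.2 = ∅)} := by
    conv_lhs => rw [numIndep]
    exact cardCongr' _ _ (E.subtypeEquiv
      (q := fun q => IndepP G (q.1.1.disjSum q.2) ∧ (q.1.2 = ∅ ∨ q.2 = ∅)) h')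
  have c1 : Fintype.card {p : Finset α × Finset β // IndepP G (p.1.disjSum p.2)} =
      numIndep G := by
    conv_rhs => rw [numIndep]
    refine (cardCongr' _ _ (finsetSumEquiv.subtypeEquiv
      (p := IndepP G) (q := fun p => IndepP G (p.1.disjSum p.2)) ?_)).symm
    intro s
    show IndepP G s ↔ IndepP G (s.toLeft.disjSum s.toRight)
    rw [Finset.toLeft_disjSum_toRight]
  have c2 : Fintype.card {T : Finset (Fin t) // T ≠ ∅} = 2 ^ t - 1 := by
    have := Fintype.card_subtype_compl (fun T : Finset (Fin t) => T = ∅)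
    rw [Fintype.card_finset, Fintype.card_fin, Fintype.card_subtype_eq] at this
    exact this
  have c3 : Fintype.card {A : Finset α // IndepP Gl A} = numIndep Gl := by
    unfold numIndep
    exact Fintype.card_congr (Equiv.refl _)
  have c4 : Fintype.card {q : (Finset α × Finset (Fin t)) × Finset β //
        IndepP G (q.1.1.disjSum q.2) ∧ (q.1.2 = ∅ ∨ q.2 = ∅)} =
      Fintype.card ({p : Finset α × Finset β // IndepP G (p.1.disjSum p.2)} ⊕
        ({T : Finset (Fin t) // T ≠ ∅} × {A : Finset α // IndepP Gl A})) :=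
    cardCongr' _ _ (splitEquiv (fun A B => IndepP G (A.disjSum B)) (IndepP Gl) hRl)
  rw [c0, c4, Fintype.card_sum, Fintype.card_prod, c1, c2, c3]

/-- `Sp(Gl ⊔ K̄_t, Gr) ⊇ Sp(Gl, Gr) + (2^t − 1)·i(Gl)`. -/
theorem stmt8 {α β : Type} [Fintype α] [Fintype β]
    (Gl : SimpleGraph α) (Gr : SimpleGraph β) (t : ℕ) :
    (fun x => x + (2 ^ t - 1) * numIndep Gl) '' spec Gl Gr ⊆
      spec (sumGraph Gl (⊥ : SimpleGraph (Fin t))) Gr := by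
  rintro x ⟨n, ⟨G, ⟨hL, hR⟩, hn⟩, rfl⟩
  refine ⟨extGraph t G, ⟨?_, ?_⟩, ?_⟩
  · rintro (a | i) (b | j)
    · exact hL a b
    · exact Iff.rfl
    · exact Iff.rfl
    · exact Iff.rfl
  · exact fun a b => hR a b
  · rw [numIndep_ext Gl t G hL, hn]
end

section
/- Let ℓ ≥ 1 and let G_L, G_R^(1), …, G_R^(ℓ) be pairwise vertex-disjoint graphs, and let G_R be the full join of G_R^(1), …, G_R^(ℓ). Then Sp(G_L, G_R) = Sp(G_L, G_R^(1)) + … + Sp(G_L, G_R^(ℓ)) − (ℓ−1)·i(G_L), where the sum of sets is the iterated sumset and subtraction of the constant (ℓ−1)·i(G_L) is applied elementwise. -/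
open Pointwise

open Sum Finset

/-- The canonical partial join of `Gl` and `Gr` with cross relation `r`. -/
def pjAux {α β : Type} (Gl : SimpleGraph α) (Gr : SimpleGraph β) (r : α → β → Prop) :
    SimpleGraph (α ⊕ β) where
  Adj x y := Sum.elim (fun a => Sum.elim (fun b => Gl.Adj a b) (fun b => r a b) y)
    (fun a => Sum.elim (fun b => r b a) (fun b => Gr.Adj a b) y) x
  symm := by
    refine ⟨?_⟩; rintro (a | a) (b | b) h <;> simp only [Sum.elim_inl, Sum.elim_inr] at h ⊢
    · exact Gl.adj_symm h
    · exact h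
    · exact h
    · exact Gr.adj_symm h
  loopless := by
    refine ⟨?_⟩; rintro (a | a) h <;> simp only [Sum.elim_inl, Sum.elim_inr] at h
    · exact Gl.loopless.irrefl _ h
    · exact Gr.loopless.irrefl _ h

lemma pjAux_isPartialJoin {α β : Type} (Gl : SimpleGraph α) (Gr : SimpleGraph β)
    (r : α → β → Prop) : IsPartialJoin Gl Gr (pjAux Gl Gr r) :=
  ⟨fun _ _ => Iff.rfl, fun _ _ => Iff.rfl⟩

open Classical in
/-- Number of independent sets of `H` with nonempty right part. -/
noncomputable def rightNE {α β : Type} [Fintype α] [Fintype β]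
    (H : SimpleGraph (α ⊕ β)) : ℕ :=
  Fintype.card {s : Finset (α ⊕ β) //
    (∀ u ∈ s, ∀ v ∈ s, ¬ H.Adj u v) ∧ s.toRight.Nonempty}

open Classical in
lemma numIndep_natCard {γ : Type} [Fintype γ] (G : SimpleGraph γ) :
    numIndep G = Nat.card {s : Finset γ // ∀ u ∈ s, ∀ v ∈ s, ¬ G.Adj u v} := by
  rw [numIndep]
  exact Nat.card_eq_fintype_card.symm

open Classical in
lemma rightNE_natCard {α β : Type} [Fintype α] [Fintype β] (H : SimpleGraph (α ⊕ β)) :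
    rightNE H = Nat.card {s : Finset (α ⊕ β) //
      (∀ u ∈ s, ∀ v ∈ s, ¬ H.Adj u v) ∧ s.toRight.Nonempty} := by
  rw [rightNE]
  exact Nat.card_eq_fintype_card.symm

open Classical in
lemma splitLemma {α β : Type} [Fintype α] [Fintype β]
    (Gl : SimpleGraph α) (Gr' : SimpleGraph β) (H : SimpleGraph (α ⊕ β))
    (hH : IsPartialJoin Gl Gr' H) :
    numIndep H = numIndep Gl + rightNE H := by
  have h1 : ∀ s : Finset (α ⊕ β), (∀ u ∈ s, ∀ v ∈ s, ¬ H.Adj u v) →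
      ∀ u ∈ s.toLeft, ∀ v ∈ s.toLeft, ¬ Gl.Adj u v := by
    intro s hs u hu v hv hadj
    exact hs _ (Finset.mem_toLeft.1 hu) _ (Finset.mem_toLeft.1 hv) ((hH.1 u v).2 hadj)
  have h2 : ∀ A : Finset α, (∀ u ∈ A, ∀ v ∈ A, ¬ Gl.Adj u v) →
      ∀ u ∈ A.disjSum (∅ : Finset β), ∀ v ∈ A.disjSum (∅ : Finset β), ¬ H.Adj u v := by
    rintro A hA (u | u) hu (v | v) hv hadj
    · exact hA u (Finset.inl_mem_disjSum.1 hu) v (Finset.inl_mem_disjSum.1 hv)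
        ((hH.1 u v).1 hadj)
    · exact (Finset.notMem_empty _ (Finset.inr_mem_disjSum.1 hv))
    · exact (Finset.notMem_empty _ (Finset.inr_mem_disjSum.1 hu))
    · exact (Finset.notMem_empty _ (Finset.inr_mem_disjSum.1 hu))
  let e : {s : Finset (α ⊕ β) // ∀ u ∈ s, ∀ v ∈ s, ¬ H.Adj u v} ≃
      ({A : Finset α // ∀ u ∈ A, ∀ v ∈ A, ¬ Gl.Adj u v} ⊕
       {s : Finset (α ⊕ β) // (∀ u ∈ s, ∀ v ∈ s, ¬ H.Adj u v) ∧ s.toRight.Nonempty}) :=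
    { toFun := fun s => if h : s.1.toRight.Nonempty then Sum.inr ⟨s.1, s.2, h⟩
        else Sum.inl ⟨s.1.toLeft, h1 s.1 s.2⟩
      invFun := fun x => Sum.elim (fun A => ⟨A.1.disjSum ∅, h2 A.1 A.2⟩)
        (fun s => ⟨s.1, s.2.1⟩) x
      left_inv := by
        intro s
        dsimp only
        by_cases h : s.1.toRight.Nonempty
        · rw [dif_pos h]
          rfl
        · rw [dif_neg h]
          apply Subtype.ext
          show s.1.toLeft.disjSum ∅ = s.1
          have he : s.1.toRight = ∅ := Finset.not_nonempty_iff_eq_empty.1 h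
          conv_rhs => rw [← Finset.toLeft_disjSum_toRight (u := s.1)]
          rw [he]
      right_inv := by
        rintro (A | s)
        · have h : ¬ ((A.1.disjSum (∅ : Finset β)).toRight.Nonempty) := by
            rw [Finset.toRight_disjSum]
            exact Finset.not_nonempty_empty
          dsimp only [Sum.elim_inl]
          rw [dif_neg h]
          exact congrArg Sum.inl (Subtype.ext Finset.toLeft_disjSum)
        · dsimp only [Sum.elim_inr]
          rw [dif_pos s.2.2] }
  rw [numIndep_natCard, numIndep_natCard, rightNE_natCard, ← Nat.card_sum]
  exact Nat.card_congr e

open Classical in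
/-- Index of the component containing the right part of `s`. -/
noncomputable def cidx {ℓ : ℕ} (hℓ : 1 ≤ ℓ) {V : Fin ℓ → Type} {α : Type}
    (s : Finset (α ⊕ Σ i, V i)) : Fin ℓ :=
  if h : (s.toRight.image Sigma.fst).Nonempty then (s.toRight.image Sigma.fst).min' h
  else ⟨0, hℓ⟩

open Classical in
lemma cidx_eq {ℓ : ℕ} (hℓ : 1 ≤ ℓ) {V : Fin ℓ → Type} {α : Type}
    {s : Finset (α ⊕ Σ i, V i)}
    (hall : ∀ x ∈ s.toRight, ∀ y ∈ s.toRight, x.1 = y.1)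
    {x : Σ i, V i} (hx : x ∈ s.toRight) : cidx hℓ s = x.1 := by
  have himg : s.toRight.image Sigma.fst = {x.1} := by
    refine Finset.eq_singleton_iff_unique_mem.2 ⟨Finset.mem_image_of_mem _ hx, ?_⟩
    intro y hy
    obtain ⟨z, hz, rfl⟩ := Finset.mem_image.1 hy
    exact hall z hz x hx
  have hne : (s.toRight.image Sigma.fst).Nonempty := by
    rw [himg]; exact Finset.singleton_nonempty _
  rw [cidx, dif_pos hne]
  refine le_antisymm (Finset.min'_le _ _ (Finset.mem_image_of_mem _ hx)) ?_
  refine Finset.le_min' _ _ _ (fun y hy => ?_)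
  rw [himg] at hy
  rw [Finset.mem_singleton.1 hy]

open Classical in
lemma keyLemma {α : Type} [Fintype α] {ℓ : ℕ} (hℓ : 1 ≤ ℓ)
    {V : Fin ℓ → Type} [∀ i, Fintype (V i)]
    (Gl : SimpleGraph α) (Gs : ∀ i, SimpleGraph (V i))
    (Gr : SimpleGraph (Σ i, V i))
    (hdiag : ∀ i (a b : V i), Gr.Adj ⟨i, a⟩ ⟨i, b⟩ ↔ (Gs i).Adj a b)
    (hcross : ∀ i j (a : V i) (b : V j), i ≠ j → Gr.Adj ⟨i, a⟩ ⟨j, b⟩)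
    (G : SimpleGraph (α ⊕ Σ i, V i)) (hG : IsPartialJoin Gl Gr G) :
    numIndep G + (ℓ - 1) * numIndep Gl =
      ∑ i, numIndep (pjAux Gl (Gs i) (fun a b => G.Adj (inl a) (inr ⟨i, b⟩))) := by
  classical
  set a := numIndep Gl with ha
  set Gi : ∀ i, SimpleGraph (α ⊕ V i) :=
    fun i => pjAux Gl (Gs i) (fun a b => G.Adj (inl a) (inr ⟨i, b⟩)) with hGi
  have hsplitG : numIndep G = a + rightNE G := splitLemma Gl Gr G hG
  have hspliti : ∀ i, numIndep (Gi i) = a + rightNE (Gi i) :=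
    fun i => splitLemma Gl (Gs i) (Gi i) (pjAux_isPartialJoin _ _ _)
  -- same-component lemma
  have hsame : ∀ s : Finset (α ⊕ Σ j, V j), (∀ u ∈ s, ∀ v ∈ s, ¬ G.Adj u v) →
      ∀ x ∈ s.toRight, ∀ y ∈ s.toRight, x.1 = y.1 := by
    intro s hs x hx y hy
    by_contra hne
    rcases x with ⟨ix, vx⟩
    rcases y with ⟨iy, vy⟩
    exact hs _ (Finset.mem_toRight.1 hx) _ (Finset.mem_toRight.1 hy)
      ((hG.2 _ _).2 (hcross ix iy vx vy hne))
  -- adjacency transfer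
  have adjE : ∀ i (x y : α ⊕ V i),
      G.Adj (Sum.map id (Sigma.mk i) x) (Sum.map id (Sigma.mk i) y) ↔ (Gi i).Adj x y := by
    rintro i (x | x) (y | y)
    · exact hG.1 x y
    · exact Iff.rfl
    · exact G.adj_comm _ _
    · exact (hG.2 _ _).trans (hdiag i x y)
  have hEinj : ∀ i : Fin ℓ, Function.Injective (Sum.map (id : α → α) (Sigma.mk i : V i → Σ j, V j)) :=
    fun i => Function.Injective.sumMap Function.injective_id sigma_mk_injective
  have hM : rightNE G = ∑ i, rightNE (Gi i) := by
    rw [rightNE_natCard]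
    refine (Nat.card_congr (Equiv.sigmaFiberEquiv
      (fun s : {s : Finset (α ⊕ Σ j, V j) //
        (∀ u ∈ s, ∀ v ∈ s, ¬ G.Adj u v) ∧ s.toRight.Nonempty} => cidx hℓ s.1)).symm).trans ?_
    letI : ∀ i : Fin ℓ, Fintype {x : {s : Finset (α ⊕ Σ j, V j) //
        (∀ u ∈ s, ∀ v ∈ s, ¬ G.Adj u v) ∧ s.toRight.Nonempty} // cidx hℓ x.1 = i} :=
      fun i => Fintype.ofFinite _
    have hsig : Nat.card (Σ i : Fin ℓ, {x : {s : Finset (α ⊕ Σ j, V j) //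
          (∀ u ∈ s, ∀ v ∈ s, ¬ G.Adj u v) ∧ s.toRight.Nonempty} // cidx hℓ x.1 = i}) =
        ∑ i : Fin ℓ, Nat.card {x : {s : Finset (α ⊕ Σ j, V j) //
          (∀ u ∈ s, ∀ v ∈ s, ¬ G.Adj u v) ∧ s.toRight.Nonempty} // cidx hℓ x.1 = i} := by
      rw [Nat.card_eq_fintype_card, Fintype.card_sigma]
      exact Finset.sum_congr rfl (fun i _ => Nat.card_eq_fintype_card.symm)
    refine hsig.trans ?_
    refine Finset.sum_congr rfl (fun i _ => ?_)
    rw [rightNE_natCard]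
    set E : (α ⊕ V i) ↪ (α ⊕ Σ j, V j) := ⟨Sum.map id (Sigma.mk i), hEinj i⟩ with hE
    set F : Finset (α ⊕ Σ j, V j) → Finset (α ⊕ V i) :=
      fun s => s.toLeft.disjSum (s.toRight.preimage (Sigma.mk i) sigma_mk_injective.injOn)
      with hF
    have mem_F : ∀ (s : Finset (α ⊕ Σ j, V j)) (u : α ⊕ V i), u ∈ F s ↔ E u ∈ s := by
      rintro s (u | u)
      · simp [hF, hE, Finset.inl_mem_disjSum]
      · simp [hF, hE, Finset.inr_mem_disjSum, Finset.mem_preimage]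
    have hFmap : ∀ t : Finset (α ⊕ V i), F (t.map E) = t := by
      intro t
      ext u
      rw [mem_F, Finset.mem_map']
    have hrecon : ∀ s : Finset (α ⊕ Σ j, V j), (∀ x ∈ s.toRight, x.1 = i) →
        (F s).map E = s := by
      intro s hall
      ext x
      simp only [Finset.mem_map]
      constructor
      · rintro ⟨y, hy, rfl⟩
        exact (mem_F s y).1 hy
      · intro hx
        rcases x with x | x
        · exact ⟨inl x, (mem_F s (inl x)).2 hx, rfl⟩
        · have hxr : x ∈ s.toRight := Finset.mem_toRight.2 hx
          have hx1 := hall x hxr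
          rcases x with ⟨j, b⟩
          cases hx1
          exact ⟨inr b, (mem_F s (inr b)).2 hx, rfl⟩
    -- all right components are i, for elements of the fiber
    have hall_of : ∀ s : Finset (α ⊕ Σ j, V j), (∀ u ∈ s, ∀ v ∈ s, ¬ G.Adj u v) →
        cidx hℓ s = i → ∀ x ∈ s.toRight, x.1 = i := by
      intro s hind hc x hx
      have := cidx_eq hℓ (hsame s hind) hx
      rw [hc] at this
      exact this.symm
    have hPmap : ∀ t : Finset (α ⊕ V i), (∀ u ∈ t, ∀ v ∈ t, ¬ (Gi i).Adj u v) →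
        ∀ u ∈ t.map E, ∀ v ∈ t.map E, ¬ G.Adj u v := by
      intro t ht u hu v hv hadj
      obtain ⟨x, hx, rfl⟩ := Finset.mem_map.1 hu
      obtain ⟨y, hy, rfl⟩ := Finset.mem_map.1 hv
      exact ht x hx y hy ((adjE i x y).1 hadj)
    have hallmap : ∀ t : Finset (α ⊕ V i), ∀ x ∈ (t.map E).toRight, x.1 = i := by
      intro t x hx
      obtain ⟨y, _, hy⟩ := Finset.mem_map.1 (Finset.mem_toRight.1 hx)
      rcases y with y | y
      · simp [hE] at hy
      · simp only [hE, Function.Embedding.coeFn_mk, Sum.map_inr] at hy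
        rw [← Sum.inr.inj hy]
    have hNEmap : ∀ t : Finset (α ⊕ V i), t.toRight.Nonempty →
        (t.map E).toRight.Nonempty := by
      intro t ⟨b, hb⟩
      exact ⟨⟨i, b⟩, Finset.mem_toRight.2
        (Finset.mem_map_of_mem _ (Finset.mem_toRight.1 hb))⟩
    have hcidxmap : ∀ t : Finset (α ⊕ V i), t.toRight.Nonempty →
        cidx hℓ (t.map E) = i := by
      intro t hne
      obtain ⟨x0, hx0⟩ := hNEmap t hne
      rw [cidx_eq hℓ (fun x hx y hy => (hallmap t x hx).trans (hallmap t y hy).symm) hx0]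
      exact hallmap t x0 hx0
    have hPF : ∀ s : Finset (α ⊕ Σ j, V j), (∀ u ∈ s, ∀ v ∈ s, ¬ G.Adj u v) →
        ∀ u ∈ F s, ∀ v ∈ F s, ¬ (Gi i).Adj u v := by
      intro s hind u hu v hv hadj
      exact hind (E u) ((mem_F s u).1 hu) (E v) ((mem_F s v).1 hv) ((adjE i u v).2 hadj)
    have hNEF : ∀ s : Finset (α ⊕ Σ j, V j), s.toRight.Nonempty →
        (∀ x ∈ s.toRight, x.1 = i) → (F s).toRight.Nonempty := by
      intro s hne hall
      obtain ⟨x, hx⟩ := hne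
      have hx1 := hall x hx
      rcases x with ⟨j, b⟩
      cases hx1
      refine ⟨b, ?_⟩
      rw [hF]
      simp only [Finset.toRight_disjSum, Finset.mem_preimage]
      exact hx
    exact Nat.card_congr
      { toFun := fun x => ⟨F x.1.1, hPF x.1.1 x.1.2.1,
          hNEF x.1.1 x.1.2.2 (hall_of x.1.1 x.1.2.1 x.2)⟩
        invFun := fun t => ⟨⟨t.1.map E, hPmap t.1 t.2.1, hNEmap t.1 t.2.2⟩,
          hcidxmap t.1 t.2.2⟩
        left_inv := fun x => Subtype.ext (Subtype.ext
          (hrecon x.1.1 (hall_of x.1.1 x.1.2.1 x.2)))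
        right_inv := fun t => Subtype.ext (hFmap t.1) }
  -- arithmetic
  have hfinal : ∑ i, numIndep (Gi i) = ℓ * a + ∑ i, rightNE (Gi i) := by
    rw [Finset.sum_congr rfl (fun i _ => hspliti i), Finset.sum_add_distrib,
      Finset.sum_const, Finset.card_univ, Fintype.card_fin, smul_eq_mul]
  rw [hfinal, hsplitG, hM]
  obtain ⟨k, rfl⟩ := Nat.exists_eq_add_of_le hℓ
  have hk : 1 + k - 1 = k := by omega
  rw [hk]
  ring

open Sum in
/-- If `Gr` is the full join of the graphs `Gs 1, …, Gs ℓ`, then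
`Sp(Gl, Gr) = Sp(Gl, Gs 1) + … + Sp(Gl, Gs ℓ) − (ℓ−1)·i(Gl)` (the subtraction of
the constant being applied elementwise, here expressed by adding it back). -/
theorem stmt9 {α : Type} [Fintype α] {ℓ : ℕ} (hℓ : 1 ≤ ℓ)
    {V : Fin ℓ → Type} [∀ i, Fintype (V i)]
    (Gl : SimpleGraph α) (Gs : ∀ i, SimpleGraph (V i))
    (Gr : SimpleGraph (Σ i, V i))
    (hdiag : ∀ i (a b : V i), Gr.Adj ⟨i, a⟩ ⟨i, b⟩ ↔ (Gs i).Adj a b)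
    (hcross : ∀ i j (a : V i) (b : V j), i ≠ j → Gr.Adj ⟨i, a⟩ ⟨j, b⟩) :
    (fun x => x + (ℓ - 1) * numIndep Gl) '' spec Gl Gr =
      ∑ i, spec Gl (Gs i) := by
  classical
  ext n
  simp only [Set.mem_image]
  constructor
  · rintro ⟨m, ⟨G, hG, rfl⟩, rfl⟩
    refine (Set.mem_fintype_sum _ _).2
      ⟨fun i => numIndep (pjAux Gl (Gs i) (fun a b => G.Adj (inl a) (inr ⟨i, b⟩))),
       fun i => ⟨_, pjAux_isPartialJoin _ _ _, rfl⟩, ?_⟩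
    exact (keyLemma hℓ Gl Gs Gr hdiag hcross G hG).symm
  · intro hn
    obtain ⟨g, hg, rfl⟩ := (Set.mem_fintype_sum _ _).1 hn
    choose H hH hnum using hg
    set G : SimpleGraph (α ⊕ Σ i, V i) :=
      pjAux Gl Gr (fun a x => (H x.1).Adj (inl a) (inr x.2)) with hGdef
    have hG : IsPartialJoin Gl Gr G := pjAux_isPartialJoin _ _ _
    have hHeq : ∀ i, pjAux Gl (Gs i) (fun a b => G.Adj (inl a) (inr ⟨i, b⟩)) = H i := by
      intro i
      ext x y
      rcases x with x | x <;> rcases y with y | y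
      · exact Iff.rfl.trans ((hH i).1 x y).symm
      · exact Iff.rfl
      · exact Iff.rfl.trans ((H i).adj_comm _ _)
      · exact ((hH i).2 x y).symm
    refine ⟨numIndep G, ⟨G, hG, rfl⟩, ?_⟩
    rw [keyLemma hℓ Gl Gs Gr hdiag hcross G hG]
    exact Finset.sum_congr rfl (fun i _ => by rw [hHeq i, hnum i])
end

section
/- Let d ≥ 1, m ≥ 1, Q = [m]^d and Q̂ = [2m]^d. For S ⊆ Q define the checkered extension S_c ⊆ Q̂ as the set of points x + m·v with x ∈ Q and v ∈ {0,1}^d such that either (x ∈ S and v has even coordinate sum) or (x ∉ S and v has odd coordinate sum). Then for any 0 ≤ ℓ ≤ d−1, distinct indices j_1,…,j_ℓ ∈ [d] and values k_1,…,k_ℓ ∈ [m], we have |S_c ∩ H(j_1,k_1) ∩ … ∩ H(j_ℓ,k_ℓ)| = (1/2)·(2m)^{d−ℓ}. -/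
def baseCube (d m : ℕ) : Set (Fin d → ℤ) :=
  {x | ∀ i, x i ∈ Finset.Icc (1 : ℤ) (m : ℤ)}

def checkered (d m : ℕ) (S : Set (Fin d → ℤ)) : Set (Fin d → ℤ) :=
  {y | ∃ x ∈ baseCube d m, ∃ v : Fin d → ℤ,
    (∀ i, v i = 0 ∨ v i = 1) ∧ y = x + (m : ℤ) • v ∧
    ((x ∈ S ∧ Even (∑ i, v i)) ∨ (x ∉ S ∧ Odd (∑ i, v i)))}

def xpart {d : ℕ} (m : ℕ) (y : Fin d → ℤ) : Fin d → ℤ :=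
  fun i => if y i ≤ (m : ℤ) then y i else y i - m

def vpart {d : ℕ} (m : ℕ) (y : Fin d → ℤ) : Fin d → ℤ :=
  fun i => if y i ≤ (m : ℤ) then 0 else 1

lemma mem_checkered_iff {d m : ℕ} (hm : 1 ≤ m) (S : Set (Fin d → ℤ)) (y : Fin d → ℤ) :
    y ∈ checkered d m S ↔
      (∀ i, 1 ≤ y i ∧ y i ≤ 2 * (m : ℤ)) ∧
      ((xpart m y ∈ S ∧ Even (∑ i, vpart m y i)) ∨
        (xpart m y ∉ S ∧ Odd (∑ i, vpart m y i))) := by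
  have hm' : (1 : ℤ) ≤ (m : ℤ) := by exact_mod_cast hm
  constructor
  · rintro ⟨x, hx, v, hv01, hy, hcond⟩
    have key : ∀ i, (1 ≤ y i ∧ y i ≤ 2 * (m : ℤ)) ∧ xpart m y i = x i ∧ vpart m y i = v i := by
      intro i
      have hxi := hx i
      rw [Finset.mem_Icc] at hxi
      have hyi : y i = x i + (m : ℤ) * v i := by rw [hy]; simp
      unfold xpart vpart
      rcases hv01 i with h | h <;>
        rw [h] at hyi ⊢ <;> simp only [mul_zero, mul_one, add_zero] at hyi <;>
        split_ifs <;> omega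
    have hx' : xpart m y = x := funext fun i => (key i).2.1
    have hv' : vpart m y = v := funext fun i => (key i).2.2
    exact ⟨fun i => (key i).1, by rw [hx', hv']; exact hcond⟩
  · rintro ⟨hb, hcond⟩
    refine ⟨xpart m y, ?_, vpart m y, ?_, ?_, hcond⟩
    · intro i
      rw [Finset.mem_Icc]
      have := hb i
      unfold xpart; split_ifs <;> omega
    · intro i; unfold vpart; split_ifs <;> simp
    · funext i
      simp only [Pi.add_apply, Pi.smul_apply, smul_eq_mul, xpart, vpart]
      split_ifs <;> ring

set_option maxHeartbeats 1600000 in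
/-- The intersection of a checkered extension with `ℓ ≤ d−1` axis-parallel
hyperplanes `H(j_a, k_a)` (distinct coordinates, values in `[m]`) has exactly
`(1/2)·(2m)^(d−ℓ) = 2^(d−ℓ−1)·m^(d−ℓ)` points. -/
theorem stmt11 {d m ℓ : ℕ} (hd : 1 ≤ d) (hm : 1 ≤ m) (hℓ : ℓ ≤ d - 1)
    (S : Set (Fin d → ℤ)) (hS : S ⊆ baseCube d m)
    (j : Fin ℓ → Fin d) (hj : Function.Injective j) (k : Fin ℓ → ℤ)
    (hk : ∀ a, k a ∈ Finset.Icc (1 : ℤ) (m : ℤ)) :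
    Set.ncard {y | y ∈ checkered d m S ∧ ∀ a, y (j a) = k a}
      = 2 ^ (d - ℓ - 1) * m ^ (d - ℓ) := by
  classical
  have hm' : (1 : ℤ) ≤ (m : ℤ) := by exact_mod_cast hm
  have hld : ℓ < d := by omega
  -- pick a coordinate i0 not in the range of j
  have hcard : (Finset.image j Finset.univ).card = ℓ := by
    rw [Finset.card_image_of_injective _ hj, Finset.card_univ, Fintype.card_fin]
  obtain ⟨i0, hi0⟩ : ∃ i0, i0 ∉ Finset.image j Finset.univ := by
    by_contra h
    push_neg at h
    have he : Finset.image j Finset.univ = Finset.univ := Finset.eq_univ_iff_forall.mpr h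
    rw [he, Finset.card_univ, Fintype.card_fin] at hcard
    omega
  have hji0 : ∀ a, j a ≠ i0 := fun a h => hi0 (Finset.mem_image.mpr ⟨a, Finset.mem_univ a, h⟩)
  set A : Set (Fin d → ℤ) :=
    {y | (∀ i, 1 ≤ y i ∧ y i ≤ 2 * (m : ℤ)) ∧ ∀ a, y (j a) = k a} with hA
  set T : Set (Fin d → ℤ) := {y | y ∈ checkered d m S ∧ ∀ a, y (j a) = k a} with hT
  set T' : Set (Fin d → ℤ) := A \ checkered d m S with hT'
  have hTA : T = A ∩ checkered d m S := by
    ext y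
    simp only [hT, hA, Set.mem_setOf_eq, Set.mem_inter_iff, mem_checkered_iff hm]
    tauto
  -- the ambient slab A as a finset
  set F : Finset (Fin d → ℤ) :=
    Fintype.piFinset (fun i =>
      if h : i ∈ Finset.image j Finset.univ
      then {k (Finset.mem_image.mp h).choose}
      else Finset.Icc (1 : ℤ) (2 * (m : ℤ))) with hF
  have hAF : A = ↑F := by
    ext y
    simp only [hA, hF, Set.mem_setOf_eq, Finset.coe_sort_coe, Finset.mem_coe,
      Fintype.mem_piFinset]
    constructor
    · rintro ⟨hb, hc⟩ i
      by_cases h : i ∈ Finset.image j Finset.univ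
      · rw [dif_pos h, Finset.mem_singleton]
        obtain ⟨ha, hja⟩ := (Finset.mem_image.mp h).choose_spec
        have := hc (Finset.mem_image.mp h).choose
        rw [hja] at this
        exact this
      · rw [dif_neg h, Finset.mem_Icc]
        exact hb i
    · intro h
      constructor
      · intro i
        have hi := h i
        by_cases hmem : i ∈ Finset.image j Finset.univ
        · rw [dif_pos hmem, Finset.mem_singleton] at hi
          obtain ⟨a, -, rfl⟩ := Finset.mem_image.mp hmem
          have := hk (Finset.mem_image.mp hmem).choose
          rw [Finset.mem_Icc] at this
          rw [hi]; omega
        · rw [dif_neg hmem, Finset.mem_Icc] at hi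
          exact hi
      · intro a
        have hmem : j a ∈ Finset.image j Finset.univ :=
          Finset.mem_image.mpr ⟨a, Finset.mem_univ a, rfl⟩
        have hi := h (j a)
        rw [dif_pos hmem, Finset.mem_singleton] at hi
        obtain ⟨ha, hja⟩ := (Finset.mem_image.mp hmem).choose_spec
        have : (Finset.mem_image.mp hmem).choose = a := hj hja
        rw [hi, this]
  have hFcard : F.card = (2 * m) ^ (d - ℓ) := by
    rw [hF, Fintype.card_piFinset]
    have hfib : ∀ i : Fin d, ((if h : i ∈ Finset.image j Finset.univ
        then ({k (Finset.mem_image.mp h).choose} : Finset ℤ)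
        else Finset.Icc (1 : ℤ) (2 * (m : ℤ))).card)
        = if i ∈ Finset.image j Finset.univ then 1 else 2 * m := by
      intro i
      by_cases h : i ∈ Finset.image j Finset.univ
      · rw [dif_pos h, if_pos h, Finset.card_singleton]
      · rw [dif_neg h, if_neg h, Int.card_Icc]
        omega
    simp only [hfib]
    rw [Finset.prod_ite, Finset.prod_const, Finset.prod_const, one_pow, one_mul]
    congr 1
    have hadd := Finset.card_filter_add_card_filter_not
      (s := (Finset.univ : Finset (Fin d))) (p := fun i => i ∈ Finset.image j Finset.univ)
    have hfil : Finset.univ.filter (fun i => i ∈ Finset.image j Finset.univ)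
        = Finset.image j Finset.univ := Finset.filter_univ_mem _
    rw [hfil, hcard, Finset.card_univ, Fintype.card_fin] at hadd
    omega
  -- the flip involution
  set fl : (Fin d → ℤ) → (Fin d → ℤ) :=
    fun y => Function.update y i0 (if y i0 ≤ (m : ℤ) then y i0 + m else y i0 - m) with hfl
  have hflA : ∀ y ∈ A, fl y ∈ A := by
    rintro y ⟨hb, hc⟩
    refine ⟨?_, ?_⟩
    · intro i
      rcases eq_or_ne i i0 with rfl | hne
      · have := hb i
        simp only [hfl, Function.update_self]
        split_ifs <;> omega
      · simp only [hfl, Function.update_of_ne hne]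
        exact hb i
    · intro a
      simp only [hfl, Function.update_of_ne (hji0 a)]
      exact hc a
  have hflfl : ∀ y ∈ A, fl (fl y) = y := by
    rintro y ⟨hb, -⟩
    have hb0 := hb i0
    funext i
    rcases eq_or_ne i i0 with rfl | hne
    · simp only [hfl, Function.update_self]
      split_ifs <;> omega
    · simp only [hfl, Function.update_of_ne hne]
  have hflmem : ∀ y ∈ A, (fl y ∈ checkered d m S ↔ y ∉ checkered d m S) := by
    rintro y ⟨hb, hc⟩
    have hb0 := hb i0
    have hbfl : ∀ i, 1 ≤ fl y i ∧ fl y i ≤ 2 * (m : ℤ) := (hflA y ⟨hb, hc⟩).1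
    have hx : xpart m (fl y) = xpart m y := by
      funext i
      rcases eq_or_ne i i0 with rfl | hne
      · have := hb i
        simp only [xpart, hfl, Function.update_self]
        split_ifs <;> omega
      · simp only [xpart, hfl, Function.update_of_ne hne]
    have hv : vpart m (fl y) = Function.update (vpart m y) i0 (1 - vpart m y i0) := by
      funext i
      rcases eq_or_ne i i0 with rfl | hne
      · have := hb i
        simp only [vpart, hfl, Function.update_self]
        split_ifs <;> omega
      · simp only [vpart, hfl, Function.update_of_ne hne]
    have h01 : vpart m y i0 = 0 ∨ vpart m y i0 = 1 := by
      simp only [vpart]; split_ifs <;> simp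
    have hsum : ∑ i, vpart m (fl y) i = (∑ i, vpart m y i) + 1 - 2 * vpart m y i0 := by
      rw [hv, Finset.sum_update_of_mem (Finset.mem_univ i0)]
      have h1 : ∑ i, vpart m y i
          = vpart m y i0 + ∑ i ∈ Finset.univ \ {i0}, vpart m y i :=
        Finset.sum_eq_add_sum_sdiff_singleton_of_mem (Finset.mem_univ i0) _
      omega
    have hev : Even ((∑ i, vpart m y i) + 1 - 2 * vpart m y i0)
        ↔ Odd (∑ i, vpart m y i) := by
      rw [Int.even_sub, Int.even_add]
      rcases h01 with h | h <;> rw [h] <;>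
        simp [Int.even_iff, Int.odd_iff, Int.add_mul_emod_self_left]
    have hodd : Odd ((∑ i, vpart m y i) + 1 - 2 * vpart m y i0)
        ↔ Even (∑ i, vpart m y i) := by
      rw [Int.odd_iff, Int.even_iff]
      rcases h01 with h | h <;> rw [h] <;> omega
    rw [mem_checkered_iff hm, mem_checkered_iff hm, hx, hsum, hev, hodd]
    have hoe : ¬ (Even (∑ i, vpart m y i) ∧ Odd (∑ i, vpart m y i)) := by
      rw [Int.even_iff, Int.odd_iff]; omega
    have hoe2 : Even (∑ i, vpart m y i) ∨ Odd (∑ i, vpart m y i) := Int.even_or_odd _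
    constructor
    · rintro ⟨-, h'⟩ ⟨-, h⟩
      tauto
    · intro hn
      refine ⟨hbfl, ?_⟩
      have hnp := fun p => hn ⟨hb, p⟩
      tauto
  -- conclude
  have hAfin : A.Finite := hAF ▸ F.finite_toSet
  have hTfin : T.Finite := hAfin.subset (hTA ▸ Set.inter_subset_left)
  have hT'fin : T'.Finite := hAfin.subset Set.diff_subset
  have himg : T' = fl '' T := by
    apply Set.Subset.antisymm
    · intro z hz
      obtain ⟨hzA, hzc⟩ := hz
      refine ⟨fl z, ?_, hflfl z hzA⟩
      rw [hTA]
      exact ⟨hflA z hzA, by rw [hflmem z hzA]; simpa using hzc⟩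
    · rintro z ⟨y, hy, rfl⟩
      rw [hTA] at hy
      exact ⟨hflA y hy.1, by rw [hflmem y hy.1]; exact fun h => h hy.2⟩
  have hinj : Set.InjOn fl T := by
    intro y hy y' hy' hEq
    rw [hTA] at hy hy'
    have := congrArg fl hEq
    rwa [hflfl y hy.1, hflfl y' hy'.1] at this
  have hT'card : T'.ncard = T.ncard := by
    rw [himg, Set.ncard_image_of_injOn hinj]
  have hunion : A = T ∪ T' := by
    rw [hTA, hT']
    ext y
    by_cases h : y ∈ checkered d m S <;> simp [h]
  have hdisj : Disjoint T T' := by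
    rw [hTA, hT']
    exact Set.disjoint_sdiff_right.mono_left Set.inter_subset_right
  have hAcard : A.ncard = (2 * m) ^ (d - ℓ) := by
    rw [hAF, Set.ncard_coe_finset, hFcard]
  have h2 : T.ncard + T'.ncard = (2 * m) ^ (d - ℓ) := by
    rw [← hAcard, hunion, Set.ncard_union_eq hdisj hTfin hT'fin]
  rw [hT'card] at h2
  have hpow : (2 * m) ^ (d - ℓ) = 2 * (2 ^ (d - ℓ - 1) * m ^ (d - ℓ)) := by
    rw [mul_pow, ← mul_assoc]
    congr 1
    rw [← pow_succ']
    congr 1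
    omega
  omega
end

section
/- Let G = ([n], E) be a simple graph and S_G = ⋃_{e=uv ∈ E} {x ∈ 𝔽₂ⁿ : x_u = x_v = 1}. Then S_G is a [3,1]-avoider: no 3-dimensional affine subspace F of 𝔽₂ⁿ satisfies |F ∩ S_G| = 1. -/
/-- For a graph `G` on `[n]`, the set `S_G = ⋃_{uv ∈ E} {x ∈ 𝔽₂ⁿ : x_u = x_v = 1}`
is a `[3,1]`-avoider: no 3-dimensional affine subspace `F = v + W` of `𝔽₂ⁿ`
meets `S_G` in exactly one point. -/
theorem stmt15 (n : ℕ) (G : SimpleGraph (Fin n))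
    (W : Submodule (ZMod 2) (Fin n → ZMod 2)) (hW : Module.finrank (ZMod 2) W = 3)
    (v : Fin n → ZMod 2) :
    Set.ncard ({y : Fin n → ZMod 2 | ∃ w ∈ W, y = v + w} ∩
        {x : Fin n → ZMod 2 | ∃ u u', G.Adj u u' ∧ x u = 1 ∧ x u' = 1}) ≠ 1 := by
  intro h
  obtain ⟨a, ha⟩ := Set.ncard_eq_one.mp h
  have haMem : a ∈ ({a} : Set (Fin n → ZMod 2)) := rfl
  rw [← ha] at haMem
  obtain ⟨⟨w0, hw0, hav⟩, u, u', hadj, hu, hu'⟩ := haMem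
  -- linear map to 𝔽₂²
  let f : (Fin n → ZMod 2) →ₗ[ZMod 2] (ZMod 2 × ZMod 2) :=
    (LinearMap.proj u).prod (LinearMap.proj u')
  let g := f.comp W.subtype
  have hrange : Module.finrank (ZMod 2) (LinearMap.range g) ≤ 2 := by
    calc Module.finrank (ZMod 2) (LinearMap.range g)
        ≤ Module.finrank (ZMod 2) (ZMod 2 × ZMod 2) := Submodule.finrank_le _
      _ = 2 := by simp [Module.finrank_prod]
  have hrn := LinearMap.finrank_range_add_finrank_ker g
  rw [hW] at hrn
  have hker : Module.finrank (ZMod 2) (LinearMap.ker g) ≠ 0 := by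
    intro hz
    rw [hz, Nat.add_zero] at hrn
    rw [hrn] at hrange
    exact absurd hrange (by norm_num)
  have : LinearMap.ker g ≠ ⊥ := by
    intro hbot
    rw [hbot] at hker
    simp at hker
  obtain ⟨w, hwker, hwne⟩ := Submodule.exists_mem_ne_zero_of_ne_bot this
  have hwW : (w : Fin n → ZMod 2) ∈ W := w.2
  have hkw := (LinearMap.mem_ker.mp hwker)
  have hwu : (w : Fin n → ZMod 2) u = 0 := congrArg Prod.fst hkw
  have hwu' : (w : Fin n → ZMod 2) u' = 0 := congrArg Prod.snd hkw
  -- a + w is also in the intersection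
  have hbMem : a + (w : Fin n → ZMod 2) ∈
      ({y : Fin n → ZMod 2 | ∃ w ∈ W, y = v + w} ∩
        {x : Fin n → ZMod 2 | ∃ u u', G.Adj u u' ∧ x u = 1 ∧ x u' = 1}) := by
    constructor
    · exact ⟨w0 + (w : Fin n → ZMod 2), W.add_mem hw0 hwW, by rw [hav]; abel⟩
    · exact ⟨u, u', hadj, by simp [hu, hwu], by simp [hu', hwu']⟩
  rw [ha] at hbMem
  have : (w : Fin n → ZMod 2) = 0 := by
    have := hbMem
    simp only [Set.mem_singleton_iff] at this
    have := congrArg (fun z => z - a) this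
    simpa using this
  exact hwne (Subtype.ext this)
end

section
/- For every matching number threshold: if a graph G has vertex cover number τ(G) > r, then G contains a matching of size at least ⌈(r+1)/2⌉, and hence i(G) ≤ 3^{⌈(r+1)/2⌉} · 2^{n − 2⌈(r+1)/2⌉} ≤ 2^n · (3/4)^{r/2} for G on n vertices. -/
lemma aux_match {V : Type} [Fintype V] (G : SimpleGraph V) (r : ℕ)
    (hτ : ∀ C : Finset V, (∀ u v, G.Adj u v → u ∈ C ∨ v ∈ C) → r < C.card) :
    ∀ k, 2 * k ≤ r + 2 → ∃ f1 f2 : Fin k → V,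
      (∀ i, G.Adj (f1 i) (f2 i)) ∧ Function.Injective (Sum.elim f1 f2) := by
  classical
  intro k
  induction k with
  | zero =>
    intro _
    exact ⟨Fin.elim0, Fin.elim0, fun i => i.elim0, fun x y _ => by
      rcases x with i | i <;> exact i.elim0⟩
  | succ k ih =>
    intro hk
    obtain ⟨f1, f2, hadj, hinj⟩ := ih (by omega)
    set C : Finset V := Finset.image (Sum.elim f1 f2) Finset.univ with hC
    have hCcard : C.card ≤ r := by
      calc C.card ≤ (Finset.univ : Finset (Fin k ⊕ Fin k)).card := Finset.card_image_le
        _ = 2 * k := by simp [Fintype.card_sum]; ring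
        _ ≤ r := by omega
    have hnotcover : ¬ (∀ u v, G.Adj u v → u ∈ C ∨ v ∈ C) := fun h => by
      have := hτ C h; omega
    push_neg at hnotcover
    obtain ⟨u, v, huv, hu, hv⟩ := hnotcover
    have hf1C : ∀ i, f1 i ∈ C := fun i => Finset.mem_image.2 ⟨Sum.inl i, Finset.mem_univ _, rfl⟩
    have hf2C : ∀ i, f2 i ∈ C := fun i => Finset.mem_image.2 ⟨Sum.inr i, Finset.mem_univ _, rfl⟩
    refine ⟨Fin.cons u f1, Fin.cons v f2, ?_, ?_⟩
    · intro i
      rcases Fin.eq_zero_or_eq_succ i with rfl | ⟨j, rfl⟩ <;> simp [huv, hadj]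
    · intro x y hxy
      rcases x with i | i <;> rcases y with j | j <;>
        rcases Fin.eq_zero_or_eq_succ i with rfl | ⟨i, rfl⟩ <;>
        rcases Fin.eq_zero_or_eq_succ j with rfl | ⟨j, rfl⟩ <;>
        simp only [Sum.elim_inl, Sum.elim_inr, Fin.cons_zero, Fin.cons_succ] at hxy <;>
        first
        | rfl
        | (exact absurd hxy (G.ne_of_adj huv))
        | (exact absurd hxy.symm (G.ne_of_adj huv))
        | (exact hu.elim (by rw [hxy]; first | exact hf1C _ | exact hf2C _))
        | (exact hv.elim (by rw [hxy]; first | exact hf1C _ | exact hf2C _))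
        | (exact hu.elim (by rw [← hxy]; first | exact hf1C _ | exact hf2C _))
        | (exact hv.elim (by rw [← hxy]; first | exact hf1C _ | exact hf2C _))
        | (have := hinj (a₁ := Sum.inl _) (a₂ := Sum.inl _) hxy; simp_all)
        | (have := hinj (a₁ := Sum.inr _) (a₂ := Sum.inr _) hxy; simp_all)
        | (have := hinj (a₁ := Sum.inl _) (a₂ := Sum.inr _) hxy; simp_all)
        | (have := hinj (a₁ := Sum.inr _) (a₂ := Sum.inl _) hxy; simp_all)

lemma aux_count {V : Type} [Fintype V] (G : SimpleGraph V) (m : ℕ)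
    (f1 f2 : Fin m → V) (hadj : ∀ i, G.Adj (f1 i) (f2 i))
    (hinj : Function.Injective (Sum.elim f1 f2)) :
    numIndep G ≤ 3 ^ m * 2 ^ (Fintype.card V - 2 * m) := by
  classical
  set D : Finset V := Finset.image (Sum.elim f1 f2) Finset.univ with hD
  set R : Finset V := Dᶜ with hR
  have hDcard : D.card = 2 * m := by
    rw [hD, Finset.card_image_of_injective _ hinj]
    simp [Fintype.card_sum]; ring
  have hRcard : R.card = Fintype.card V - 2 * m := by
    rw [hR, Finset.card_compl, hDcard]
  -- target type
  let T3 := {p : Bool × Bool // p ≠ (true, true)}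
  have hT3 : Fintype.card T3 = 3 := by decide
  let F : {s : Finset V // ∀ u ∈ s, ∀ v ∈ s, ¬ G.Adj u v} →
      (Fin m → T3) × Finset {x : V // x ∈ R} :=
    fun s => (fun i => ⟨(decide (f1 i ∈ s.1), decide (f2 i ∈ s.1)), by
        intro h
        have h1 : f1 i ∈ s.1 := by
          have := congrArg Prod.fst h; simpa using this
        have h2 : f2 i ∈ s.1 := by
          have := congrArg Prod.snd h; simpa using this
        exact s.2 _ h1 _ h2 (hadj i)⟩,
      s.1.subtype (· ∈ R))
  have hFinj : Function.Injective F := by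
    intro s t hst
    have h1 := congrArg Prod.fst hst
    have h2 := congrArg Prod.snd hst
    simp only [F] at h1 h2
    ext v
    by_cases hv : v ∈ R
    · have := congrArg (fun (w : Finset {x : V // x ∈ R}) => (⟨v, hv⟩ : {x : V // x ∈ R}) ∈ w) h2
      simpa [Finset.mem_subtype] using this
    · have hvD : v ∈ D := by
        rw [hR] at hv; simpa using hv
      rw [hD] at hvD
      obtain ⟨x, -, hx⟩ := Finset.mem_image.1 hvD
      rcases x with i | i
      · have := congrArg (fun g => ((g i : T3).1.1 : Bool)) h1
        simp only at this
        rw [decide_eq_decide] at this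
        simp only [Sum.elim_inl] at hx
        rw [hx] at this
        exact this
      · have := congrArg (fun g => ((g i : T3).1.2 : Bool)) h1
        simp only at this
        rw [decide_eq_decide] at this
        simp only [Sum.elim_inr] at hx
        rw [hx] at this
        exact this
  calc numIndep G ≤ Fintype.card ((Fin m → T3) × Finset {x : V // x ∈ R}) := by
        rw [numIndep]; exact Fintype.card_le_of_injective F hFinj
    _ = 3 ^ m * 2 ^ (Fintype.card V - 2 * m) := by
        rw [Fintype.card_prod, Fintype.card_fun, hT3, Fintype.card_finset,
          Fintype.card_coe, hRcard, Fintype.card_fin]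


lemma aux_real (n m r : ℕ) (hmn : 2 * m ≤ n) (hrm : r ≤ 2 * m) :
    (3 : ℝ) ^ m * 2 ^ (n - 2 * m) ≤ 2 ^ n * (3 / 4) ^ ((r : ℝ) / 2) := by
  have h1 : ((3 : ℝ) / 4) ^ ((m : ℝ)) ≤ (3 / 4) ^ ((r : ℝ) / 2) := by
    apply Real.rpow_le_rpow_of_exponent_ge (by norm_num) (by norm_num)
    have : (r : ℝ) ≤ 2 * m := by exact_mod_cast hrm
    linarith
  have h2 : ((3 : ℝ) / 4) ^ ((m : ℝ)) = 3 ^ m / 2 ^ (2 * m) := by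
    rw [Real.rpow_natCast, div_pow, pow_mul]
    norm_num
  have h3 : (2 : ℝ) ^ (n - 2 * m) = 2 ^ n / 2 ^ (2 * m) := by
    rw [pow_sub₀ (2 : ℝ) (by norm_num) hmn]; ring
  calc (3 : ℝ) ^ m * 2 ^ (n - 2 * m) = 2 ^ n * (3 ^ m / 2 ^ (2 * m)) := by
        rw [h3]; ring
    _ ≤ 2 ^ n * (3 / 4) ^ ((r : ℝ) / 2) := by
        apply mul_le_mul_of_nonneg_left (h2 ▸ h1) (by positivity)


/-- If every vertex cover of `G` has more than `r` vertices (i.e. `τ(G) > r`), then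
`G` contains a matching of size `⌈(r+1)/2⌉ = (r+2)/2` (given by edges `f1 i — f2 i`
with all endpoints distinct), and hence
`i(G) ≤ 3^⌈(r+1)/2⌉ · 2^(n − 2⌈(r+1)/2⌉) ≤ 2^n · (3/4)^(r/2)`. -/
theorem stmt18 {V : Type} [Fintype V] (G : SimpleGraph V) (r : ℕ)
    (hτ : ∀ C : Finset V, (∀ u v, G.Adj u v → u ∈ C ∨ v ∈ C) → r < C.card) :
    (∃ f1 f2 : Fin ((r + 2) / 2) → V,
      (∀ i, G.Adj (f1 i) (f2 i)) ∧ Function.Injective (Sum.elim f1 f2)) ∧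
    numIndep G ≤ 3 ^ ((r + 2) / 2) * 2 ^ (Fintype.card V - 2 * ((r + 2) / 2)) ∧
    ((3 : ℝ) ^ ((r + 2) / 2) * 2 ^ (Fintype.card V - 2 * ((r + 2) / 2)) ≤
      2 ^ Fintype.card V * (3 / 4) ^ ((r : ℝ) / 2)) := by
  obtain ⟨f1, f2, hadj, hinj⟩ := aux_match G r hτ ((r + 2) / 2) (by omega)
  have hmn : 2 * ((r + 2) / 2) ≤ Fintype.card V := by
    have := Fintype.card_le_of_injective _ hinj
    simpa [Fintype.card_sum, two_mul] using this
  exact ⟨⟨f1, f2, hadj, hinj⟩, aux_count G _ f1 f2 hadj hinj,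
    aux_real _ _ r hmn (by omega)⟩
end
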